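/- Let p be an odd prime, 0 ≤ k ≤ p−1, and n > 1 even. The polynomial f_{n,k}(x) = k·∑_{j≥0} C(n−1,2j+1)(x^j − x^{j+1}) + 2·∑_{j≥0} C(n,2j) x^j, viewed in F_p[x], is self-reciprocal if and only if k = 0, or (k = 2 and n is not of the form 2lp for a positive integer l). -/

import Mathlib

open Polynomial Finset

/-!
Write `E_n = ∑ C(n, 2j) X^j` and `O_n = ∑ C(n, 2j+1) X^j`, so that `(1 + √x)^n = E_n + √x O_n`.
Pascal's rule `E_{n+1} = E_n + X O_n`, `O_{n+1} = O_n + E_n` turns the definition into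
`f_{n,k} = (2 - k) E_n + k O_n`. For `n = 2m` the symmetry of binomial coefficients makes `E_n`
palindromic of degree `m` and `O_n` palindromic of degree `m - 1`, i.e. `X^m O_n(1/X) = X O_n`.

If `k ≢ 2`, then `f_{n,k}` has degree exactly `m` and its reversal is `(2 - k) E_n + k X O_n`,
which equals `f_{n,k}` iff `k (X - 1) O_n = 0`, i.e. iff `k ≡ 0`: indeed `O_n ≠ 0` in `F_p[X]`, as
its coefficient `C(n, p^v)` with `p^v ‖ n` (odd since `p` is) is `≡ n / p^v ≢ 0` by Lucas.
If `k = 2`, then `f_{n,2} = 2 O_n`, palindromic of formal degree `m - 1`, and it is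
self-reciprocal iff that is its true degree, iff its constant term `n` is nonzero mod `p`.
-/

/-- The polynomial `f_{n,k}` over `F_p`. -/
noncomputable def fnkP (p n k : ℕ) : Polynomial (ZMod p) :=
  Polynomial.C (k : ZMod p) * ∑ j ∈ range (n + 1),
      (Nat.choose (n - 1) (2 * j + 1) : Polynomial (ZMod p)) * (X ^ j - X ^ (j + 1))
    + 2 * ∑ j ∈ range (n + 1), (Nat.choose n (2 * j) : Polynomial (ZMod p)) * X ^ j

section BinomialParts

variable (R : Type*) [Semiring R]

noncomputable def evenBinomialPoly (n : ℕ) : R[X] :=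
  ∑ j ∈ range (n + 1), (n.choose (2 * j) : R[X]) * X ^ j

noncomputable def oddBinomialPoly (n : ℕ) : R[X] :=
  ∑ j ∈ range (n + 1), (n.choose (2 * j + 1) : R[X]) * X ^ j

variable {R}

lemma coeff_sum_range_natCast_mul_X_pow (c : ℕ → ℕ) (N i : ℕ) :
    (∑ j ∈ range N, (c j : R[X]) * X ^ j).coeff i = if i < N then (c i : R) else 0 := by
  simp only [finsetSum_coeff, coeff_natCast_mul, coeff_X_pow, mul_ite, mul_one, mul_zero,
    sum_ite_eq, mem_range]

@[simp]
lemma coeff_evenBinomialPoly (n i : ℕ) : (evenBinomialPoly R n).coeff i = n.choose (2 * i) := by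
  rw [evenBinomialPoly, coeff_sum_range_natCast_mul_X_pow, ite_eq_left_iff]
  intro hi
  rw [Nat.choose_eq_zero_of_lt (by omega), Nat.cast_zero]

@[simp]
lemma coeff_oddBinomialPoly (n i : ℕ) :
    (oddBinomialPoly R n).coeff i = n.choose (2 * i + 1) := by
  rw [oddBinomialPoly, coeff_sum_range_natCast_mul_X_pow, ite_eq_left_iff]
  intro hi
  rw [Nat.choose_eq_zero_of_lt (by omega), Nat.cast_zero]

lemma evenBinomialPoly_succ (n : ℕ) :
    evenBinomialPoly R (n + 1) = evenBinomialPoly R n + X * oddBinomialPoly R n := by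
  ext (_ | i)
  · simp
  · rw [coeff_add, coeff_X_mul, coeff_evenBinomialPoly, coeff_evenBinomialPoly,
      coeff_oddBinomialPoly, Nat.mul_succ, Nat.choose_succ_succ', Nat.cast_add, add_comm]

lemma oddBinomialPoly_succ (n : ℕ) :
    oddBinomialPoly R (n + 1) = oddBinomialPoly R n + evenBinomialPoly R n := by
  ext i
  rw [coeff_add, coeff_oddBinomialPoly, coeff_oddBinomialPoly, coeff_evenBinomialPoly,
    Nat.choose_succ_succ', Nat.cast_add, add_comm]

lemma reflect_evenBinomialPoly (m : ℕ) :
    reflect m (evenBinomialPoly R (2 * m)) = evenBinomialPoly R (2 * m) := by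
  ext i
  rw [coeff_reflect]
  rcases le_or_gt i m with hi | hi
  · rw [revAt_le hi, coeff_evenBinomialPoly, coeff_evenBinomialPoly,
      ← Nat.choose_symm (by omega), show 2 * m - 2 * (m - i) = 2 * i by omega]
  · rw [revAt_eq_self_of_lt hi]

lemma reflect_oddBinomialPoly (m : ℕ) :
    reflect m (oddBinomialPoly R (2 * m)) = X * oddBinomialPoly R (2 * m) := by
  ext (_ | i)
  · simp [coeff_reflect]
  rw [coeff_reflect, coeff_X_mul]
  rcases le_or_gt (i + 1) m with hi | hi
  · rw [revAt_le hi, coeff_oddBinomialPoly, coeff_oddBinomialPoly,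
      ← Nat.choose_symm (by omega), show 2 * m - (2 * (m - (i + 1)) + 1) = 2 * i + 1 by omega]
  · rw [revAt_eq_self_of_lt hi, coeff_oddBinomialPoly, coeff_oddBinomialPoly,
      Nat.choose_eq_zero_of_lt (by omega), Nat.choose_eq_zero_of_lt (by omega)]

lemma reflect_pred_oddBinomialPoly (m : ℕ) :
    reflect (m - 1) (oddBinomialPoly R (2 * m)) = oddBinomialPoly R (2 * m) := by
  ext i
  rw [coeff_reflect]
  rcases le_or_gt i (m - 1) with hi | hi
  · rcases Nat.eq_zero_or_pos m with rfl | hm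
    · simp
    rw [revAt_le hi, coeff_oddBinomialPoly, coeff_oddBinomialPoly,
      ← Nat.choose_symm (by omega), show 2 * m - (2 * (m - 1 - i) + 1) = 2 * i + 1 by omega]
  · rw [revAt_eq_self_of_lt hi]

lemma natDegree_evenBinomialPoly_le (m : ℕ) : (evenBinomialPoly R (2 * m)).natDegree ≤ m :=
  natDegree_le_iff_coeff_eq_zero.mpr fun i hi => by
    rw [coeff_evenBinomialPoly, Nat.choose_eq_zero_of_lt (by omega), Nat.cast_zero]

lemma natDegree_oddBinomialPoly_le (m : ℕ) : (oddBinomialPoly R (2 * m)).natDegree ≤ m - 1 :=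
  natDegree_le_iff_coeff_eq_zero.mpr fun i hi => by
    rw [coeff_oddBinomialPoly, Nat.choose_eq_zero_of_lt (by omega), Nat.cast_zero]

end BinomialParts

lemma fnkP_eq_evenBinomialPoly_add_oddBinomialPoly {p n : ℕ} (k : ℕ) (hn : 1 ≤ n) :
    fnkP p n k = C (2 - (k : ZMod p)) * evenBinomialPoly (ZMod p) n
      + C (k : ZMod p) * oddBinomialPoly (ZMod p) n := by
  obtain ⟨m, rfl⟩ := Nat.exists_eq_add_of_le' hn
  have hsum : ∑ j ∈ range (m + 1 + 1), ((m + 1 - 1).choose (2 * j + 1) : (ZMod p)[X])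
      * (X ^ j - X ^ (j + 1)) = (1 - X) * oddBinomialPoly (ZMod p) m := by
    rw [sum_range_succ, Nat.add_sub_cancel, Nat.choose_eq_zero_of_lt (by omega), Nat.cast_zero,
      zero_mul, add_zero, oddBinomialPoly, mul_sum]
    exact sum_congr rfl fun j _ => by ring
  rw [fnkP, hsum, ← evenBinomialPoly, evenBinomialPoly_succ, oddBinomialPoly_succ]
  simp only [map_sub, C_ofNat]
  ring

lemma reverse_eq_self_iff_coeff_zero_ne_zero {R : Type*} [Semiring R] {f : R[X]} {N : ℕ}
    (hf0 : f ≠ 0) (hdeg : f.natDegree ≤ N) (hf : reflect N f = f) :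
    f.reverse = f ↔ f.coeff 0 ≠ 0 := by
  constructor
  · intro hrev
    rw [← hrev, coeff_zero_reverse]
    exact leadingCoeff_ne_zero.mpr hf0
  · intro h0
    have hN : f.coeff N ≠ 0 := by rwa [← hf, coeff_reflect, revAt_le le_rfl, Nat.sub_self]
    rw [reverse, le_antisymm hdeg (le_natDegree_of_ne_zero hN), hf]

lemma cast_choose_ordProj_ne_zero {p n : ℕ} (hp : p.Prime) (hn : n ≠ 0) :
    (n.choose (p ^ n.factorization p) : ZMod p) ≠ 0 := by
  have := Fact.mk hp
  have h := Choose.choose_pow_mul_pow_mul_modEq_choose_nat (p := p) (k := n.factorization p)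
    (a := n / p ^ n.factorization p) (b := 1)
  rw [mul_one, Nat.ordProj_mul_ordCompl_eq_self, Nat.choose_one_right] at h
  rw [(ZMod.natCast_eq_natCast_iff _ _ p).mpr h, Ne, ZMod.natCast_eq_zero_iff]
  exact Nat.not_dvd_ordCompl hp hn

lemma oddBinomialPoly_ne_zero {p n : ℕ} (hp : p.Prime) (hpodd : Odd p) (hn : n ≠ 0) :
    oddBinomialPoly (ZMod p) n ≠ 0 := by
  obtain ⟨c, hc⟩ : Odd (p ^ n.factorization p) := hpodd.pow
  intro h
  apply cast_choose_ordProj_ne_zero hp hn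
  rw [hc, ← coeff_oddBinomialPoly, h, coeff_zero]

lemma reverse_fnkP_two_eq_self_iff {p : ℕ} (hp : p.Prime) (hpodd : Odd p) {m : ℕ} (hm : m ≠ 0) :
    (fnkP p (2 * m) 2).reverse = fnkP p (2 * m) 2 ↔ ¬p ∣ 2 * m := by
  have := Fact.mk hp
  have h2 : (2 : ZMod p) ≠ 0 := Ring.two_ne_zero <| by
    rw [ZMod.ringChar_zmod_n]
    rintro rfl
    exact (by decide : ¬Odd 2) hpodd
  rw [fnkP_eq_evenBinomialPoly_add_oddBinomialPoly 2 (by omega), Nat.cast_ofNat, sub_self,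
    map_zero, zero_mul, zero_add,
    reverse_mul_of_domain, reverse_C, (mul_right_injective₀ (C_ne_zero.mpr h2)).eq_iff,
    reverse_eq_self_iff_coeff_zero_ne_zero (oddBinomialPoly_ne_zero hp hpodd (by omega))
      (natDegree_oddBinomialPoly_le m) (reflect_pred_oddBinomialPoly m),
    coeff_oddBinomialPoly, mul_zero, zero_add, Nat.choose_one_right, Ne, ZMod.natCast_eq_zero_iff]

lemma reverse_fnkP_eq_self_iff_of_ne_two {p : ℕ} (hp : p.Prime) (hpodd : Odd p) {m : ℕ}
    (hm : m ≠ 0) {k : ℕ} (hk : (k : ZMod p) ≠ 2) :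
    (fnkP p (2 * m) k).reverse = fnkP p (2 * m) k ↔ (k : ZMod p) = 0 := by
  have := Fact.mk hp
  set E := evenBinomialPoly (ZMod p) (2 * m)
  set O := oddBinomialPoly (ZMod p) (2 * m)
  have hf := fnkP_eq_evenBinomialPoly_add_oddBinomialPoly (p := p) k (n := 2 * m) (by omega)
  have htop : (fnkP p (2 * m) k).coeff m = 2 - k := by
    rw [hf, coeff_add, coeff_C_mul, coeff_C_mul, coeff_evenBinomialPoly, coeff_oddBinomialPoly,
      Nat.choose_self, Nat.choose_eq_zero_of_lt (by omega)]
    simp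
  have hdeg : (fnkP p (2 * m) k).natDegree = m := by
    refine le_antisymm ?_ (le_natDegree_of_ne_zero (by rw [htop]; exact sub_ne_zero.mpr hk.symm))
    rw [hf]
    exact natDegree_add_le_of_degree_le ((natDegree_C_mul_le _ _).trans
      (natDegree_evenBinomialPoly_le m)) ((natDegree_C_mul_le _ _).trans
      ((natDegree_oddBinomialPoly_le m).trans (Nat.sub_le m 1)))
  have hrev :
      (fnkP p (2 * m) k).reverse = C (2 - (k : ZMod p)) * E + C (k : ZMod p) * (X * O) := by
    rw [reverse, hdeg, hf, reflect_add, reflect_C_mul, reflect_C_mul, reflect_evenBinomialPoly,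
      reflect_oddBinomialPoly]
  rw [hrev, hf, ← sub_eq_zero, show C (2 - (k : ZMod p)) * E + C (k : ZMod p) * (X * O)
      - (C (2 - (k : ZMod p)) * E + C (k : ZMod p) * O) = C (k : ZMod p) * ((X - C 1) * O) by
    rw [map_one]; ring]
  simp only [mul_eq_zero, C_eq_zero, X_sub_C_ne_zero, oddBinomialPoly_ne_zero hp hpodd
    (show 2 * m ≠ 0 by omega), O, or_self, or_false]

lemma exists_pos_eq_two_mul_mul_iff_dvd {p m : ℕ} (hpodd : Odd p) (hm : m ≠ 0) :
    (∃ l : ℕ, 0 < l ∧ 2 * m = 2 * l * p) ↔ p ∣ 2 * m := by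
  constructor
  · rintro ⟨l, -, hl⟩
    exact ⟨2 * l, by rw [hl]; ring⟩
  · intro h
    obtain ⟨l, rfl⟩ := Nat.Coprime.dvd_of_dvd_mul_left (Nat.coprime_two_right.mpr hpodd) h
    exact ⟨l, Nat.pos_of_ne_zero (by rintro rfl; simp at hm), by ring⟩

theorem fnkP_selfReciprocal_even (p n k : ℕ) (hp : p.Prime) (hpodd : Odd p)
    (hk : k ≤ p - 1) (hn : 1 < n) (hev : Even n) :
    (fnkP p n k).reverse = fnkP p n k ↔
      k = 0 ∨ (k = 2 ∧ ¬∃ l : ℕ, 0 < l ∧ n = 2 * l * p) := by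
  obtain ⟨m, rfl⟩ := hev.two_dvd
  have hm : m ≠ 0 := by omega
  have hp3 : 3 ≤ p := by
    obtain ⟨c, rfl⟩ := hpodd
    have := hp.two_le
    omega
  have hk0 : (k : ZMod p) = 0 ↔ k = 0 := by
    rw [ZMod.natCast_eq_zero_iff]
    exact ⟨fun h => Nat.eq_zero_of_dvd_of_lt h (by omega), fun h => h ▸ dvd_zero p⟩
  have hk2 : (k : ZMod p) = 2 ↔ k = 2 := by
    rw [← Nat.cast_ofNat, ZMod.natCast_eq_natCast_iff', Nat.mod_eq_of_lt (by omega),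
      Nat.mod_eq_of_lt (by omega)]
  by_cases h2 : k = 2
  · subst h2
    rw [reverse_fnkP_two_eq_self_iff hp hpodd hm, exists_pos_eq_two_mul_mul_iff_dvd hpodd hm]
    simp
  · rw [reverse_fnkP_eq_self_iff_of_ne_two hp hpodd hm (mt hk2.mp h2), hk0]
    simp [h2]
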